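/- arXiv:1910.04251 — 3 statements merged into one kernel-verified Lean document; each statement's English description precedes it below -/
import Mathlib

section
/- Let G = (V,E) be a finite directed graph, d₀ ∈ V a depot, and x : E → {0,1} satisfy: in-degree equals out-degree at every vertex, and for every nonempty S ⊆ V \ {d₀} containing at least one vertex of positive x-degree, ∑_{e ∈ δ⁺(S)} x e ≥ 1. Then every vertex v with positive x-degree lies in the same strongly connected component (with respect to the edges selected by x) as d₀. -/
theorem cut_balance (V : Type*) [Fintype V] [DecidableEq V]
    (E : Finset (V × V)) (x : V × V → ℕ)
    (hbal : ∀ v : V,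
      ∑ e ∈ E.filter (fun e => e.2 = v), x e = ∑ e ∈ E.filter (fun e => e.1 = v), x e)
    (S : Finset V) :
    ∑ e ∈ E.filter (fun e => e.2 ∈ S ∧ e.1 ∉ S), x e
      = ∑ e ∈ E.filter (fun e => e.1 ∈ S ∧ e.2 ∉ S), x e := by
  have h1 : ∑ e ∈ E.filter (fun e => e.2 ∈ S), x e
      = ∑ e ∈ E.filter (fun e => e.1 ∈ S), x e := by
    rw [← Finset.sum_fiberwise_eq_sum_filter E S (fun e => e.2) x,
        ← Finset.sum_fiberwise_eq_sum_filter E S (fun e => e.1) x]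
    exact Finset.sum_congr rfl fun v _ => hbal v
  have h2 := Finset.sum_filter_add_sum_filter_not (E.filter (fun e => e.2 ∈ S))
      (fun e => e.1 ∈ S) x
  have h3 := Finset.sum_filter_add_sum_filter_not (E.filter (fun e => e.1 ∈ S))
      (fun e => e.2 ∈ S) x
  simp only [Finset.filter_filter] at h2 h3
  have hin : ∑ e ∈ E.filter (fun e => e.2 ∈ S ∧ e.1 ∈ S), x e
      = ∑ e ∈ E.filter (fun e => e.1 ∈ S ∧ e.2 ∈ S), x e := by
    congr 1; apply Finset.filter_congr; intro e _; simp [and_comm]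
  omega

/-- Degree balance plus the subtour-elimination constraints imply every vertex of
positive selected degree lies in the same strongly connected component as the
depot `d₀`. -/
theorem stmt_5 (V : Type*) [Fintype V] [DecidableEq V]
    (E : Finset (V × V)) (x : V × V → ℕ) (d₀ : V)
    (hx : ∀ e, x e = 0 ∨ x e = 1)
    (hbal : ∀ v : V,
      ∑ e ∈ E.filter (fun e => e.2 = v), x e = ∑ e ∈ E.filter (fun e => e.1 = v), x e)
    (hsub : ∀ S : Finset V, d₀ ∉ S →
      (∃ v ∈ S, ∃ e ∈ E, x e = 1 ∧ (e.1 = v ∨ e.2 = v)) →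
      1 ≤ ∑ e ∈ E.filter (fun e => e.1 ∈ S ∧ e.2 ∉ S), x e) :
    ∀ v : V, (∃ e ∈ E, x e = 1 ∧ (e.1 = v ∨ e.2 = v)) →
      Relation.ReflTransGen (fun a b => (a, b) ∈ E ∧ x (a, b) = 1) d₀ v ∧
      Relation.ReflTransGen (fun a b => (a, b) ∈ E ∧ x (a, b) = 1) v d₀ := by
  classical
  intro v hv
  set R : V → V → Prop := fun a b => (a, b) ∈ E ∧ x (a, b) = 1 with hR
  constructor
  · -- d₀ reaches v
    by_contra hnot
    set S : Finset V := Finset.univ.filter (fun u => ¬ Relation.ReflTransGen R d₀ u) with hS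
    have hd₀ : d₀ ∉ S := by simp [hS]; exact Relation.ReflTransGen.refl
    have hvS : v ∈ S := by simp [hS, hnot]
    have hsum := hsub S hd₀ ⟨v, hvS, hv⟩
    rw [← cut_balance V E x hbal S] at hsum
    obtain ⟨e, he, hxe⟩ := Finset.exists_ne_zero_of_sum_ne_zero (by omega :
      ∑ e ∈ E.filter (fun e => e.2 ∈ S ∧ e.1 ∉ S), x e ≠ 0)
    rw [Finset.mem_filter] at he
    obtain ⟨heE, he2, he1⟩ := he
    have hxe1 : x e = 1 := (hx e).resolve_left hxe
    have h1 : Relation.ReflTransGen R d₀ e.1 := by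
      by_contra h; exact he1 (by simp [hS, h])
    have : Relation.ReflTransGen R d₀ e.2 :=
      h1.tail ⟨by simpa using heE, by simpa using hxe1⟩
    simp [hS] at he2
    exact he2 this
  · -- v reaches d₀
    by_contra hnot
    set S : Finset V := Finset.univ.filter (fun u => ¬ Relation.ReflTransGen R u d₀) with hS
    have hd₀ : d₀ ∉ S := by simp [hS]; exact Relation.ReflTransGen.refl
    have hvS : v ∈ S := by simp [hS, hnot]
    have hsum := hsub S hd₀ ⟨v, hvS, hv⟩
    obtain ⟨e, he, hxe⟩ := Finset.exists_ne_zero_of_sum_ne_zero (by omega :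
      ∑ e ∈ E.filter (fun e => e.1 ∈ S ∧ e.2 ∉ S), x e ≠ 0)
    rw [Finset.mem_filter] at he
    obtain ⟨heE, he1, he2⟩ := he
    have hxe1 : x e = 1 := (hx e).resolve_left hxe
    have h2 : Relation.ReflTransGen R e.2 d₀ := by
      by_contra h; exact he2 (by simp [hS, h])
    have : Relation.ReflTransGen R e.1 d₀ :=
      Relation.ReflTransGen.head ⟨by simpa using heE, by simpa using hxe1⟩ h2
    simp [hS] at he1
    exact he1 this
end

section
/- Conversely, let x : E → {0,1} be an integer solution with in-degree equal to out-degree at every vertex, and suppose S is a strongly connected component of the subgraph selected by x that does not contain the depot d₀ and contains at least one selected edge. Then the subtour-elimination constraint is violated on S: ∑_{e ∈ δ⁺(S)} x e = 0, equivalently the number of selected edges with both endpoints in S equals the total selected out-degree of S. -/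
/-- A strongly connected component of the selected subgraph that avoids the depot
and contains a selected edge violates the subtour-elimination constraint:
no selected edge leaves it. -/
theorem stmt_6 (V : Type*) [Fintype V] [DecidableEq V]
    (E : Finset (V × V)) (x : V × V → ℕ) (d₀ : V) (S : Finset V)
    (hx : ∀ e, x e = 0 ∨ x e = 1)
    (hbal : ∀ v : V,
      ∑ e ∈ E.filter (fun e => e.2 = v), x e = ∑ e ∈ E.filter (fun e => e.1 = v), x e)
    -- `S` is a strongly connected component of the selected subgraph:
    (hconn : ∀ a ∈ S, ∀ b ∈ S,
      Relation.ReflTransGen (fun u w => (u, w) ∈ E ∧ x (u, w) = 1) a b)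
    (hmax : ∀ a ∈ S, ∀ v : V,
      Relation.ReflTransGen (fun u w => (u, w) ∈ E ∧ x (u, w) = 1) a v →
      Relation.ReflTransGen (fun u w => (u, w) ∈ E ∧ x (u, w) = 1) v a → v ∈ S)
    (hd₀ : d₀ ∉ S)
    (hedge : ∃ e ∈ E, x e = 1 ∧ e.1 ∈ S ∧ e.2 ∈ S) :
    ∑ e ∈ E.filter (fun e => e.1 ∈ S ∧ e.2 ∉ S), x e = 0 := by
  classical
  obtain ⟨e₀, he₀E, he₀x, ha, hb⟩ := hedge
  set r : V → V → Prop := fun u w => (u, w) ∈ E ∧ x (u, w) = 1 with hr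
  set a := e₀.1 with ha_def
  set C : Finset V := Finset.univ.filter (fun v => Relation.ReflTransGen r v a) with hC
  have hmemC : ∀ v, v ∈ C ↔ Relation.ReflTransGen r v a := by
    intro v; simp [hC]
  -- closure: selected edges into C come from C
  have hclosed : ∀ e ∈ E, x e = 1 → e.2 ∈ C → e.1 ∈ C := by
    intro e heE hex h2
    rw [hmemC] at h2 ⊢
    refine Relation.ReflTransGen.head ?_ h2
    exact ⟨by simpa using heE, by simpa using hex⟩
  -- sum the balance equations over C
  have hsum : ∑ e ∈ E.filter (fun e => e.2 ∈ C), x e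
      = ∑ e ∈ E.filter (fun e => e.1 ∈ C), x e := by
    rw [← Finset.sum_fiberwise_eq_sum_filter E C (fun e => e.2) x,
        ← Finset.sum_fiberwise_eq_sum_filter E C (fun e => e.1) x]
    exact Finset.sum_congr rfl fun v _ => hbal v
  -- split both sides on whether the other endpoint lies in C
  have hsplit2 : ∑ e ∈ E.filter (fun e => e.2 ∈ C), x e
      = ∑ e ∈ E.filter (fun e => e.1 ∈ C ∧ e.2 ∈ C), x e := by
    rw [← Finset.sum_filter_add_sum_filter_not (E.filter (fun e => e.2 ∈ C))
        (fun e => e.1 ∈ C) x, Finset.filter_filter, Finset.filter_filter]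
    have : ∑ e ∈ E.filter (fun e => e.2 ∈ C ∧ ¬ e.1 ∈ C), x e = 0 := by
      refine Finset.sum_eq_zero fun e he => ?_
      simp only [Finset.mem_filter] at he
      rcases hx e with h0 | h1
      · exact h0
      · exact absurd (hclosed e he.1 h1 he.2.1) he.2.2
    rw [this, add_zero]
    refine Finset.sum_congr ?_ fun _ _ => rfl
    apply Finset.filter_congr
    intro e _
    tauto
  have hsplit1 : ∑ e ∈ E.filter (fun e => e.1 ∈ C), x e
      = ∑ e ∈ E.filter (fun e => e.1 ∈ C ∧ e.2 ∈ C), x e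
        + ∑ e ∈ E.filter (fun e => e.1 ∈ C ∧ e.2 ∉ C), x e := by
    rw [← Finset.sum_filter_add_sum_filter_not (E.filter (fun e => e.1 ∈ C))
        (fun e => e.2 ∈ C) x, Finset.filter_filter, Finset.filter_filter]
  have hkey : ∑ e ∈ E.filter (fun e => e.1 ∈ C ∧ e.2 ∉ C), x e = 0 := by
    omega
  rw [Finset.sum_eq_zero_iff] at hkey
  refine Finset.sum_eq_zero fun e he => ?_
  simp only [Finset.mem_filter] at he
  obtain ⟨heE, h1S, h2S⟩ := he
  rcases hx e with h0 | h1
  · exact h0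
  -- e.1 ∈ C since e.1 ∈ S reaches a ∈ S
  have h1C : e.1 ∈ C := (hmemC _).2 (hconn _ h1S _ ha)
  -- e.2 ∉ C, else maximality would put e.2 in S
  have h2C : e.2 ∉ C := by
    intro h2C
    refine h2S (hmax a ha e.2 ?_ ((hmemC _).1 h2C))
    refine Relation.ReflTransGen.tail (hconn _ ha _ h1S) ?_
    exact ⟨by simpa using heE, by simpa using h1⟩
  exact hkey e (Finset.mem_filter.mpr ⟨heE, h1C, h2C⟩)
end

section
/- Under the hypotheses of the flow-based subtour elimination (f e > 0, z_{ij} ≤ F x_{ij}, flow balance at targets, z initialized at depots), along any directed path v₀ → v₁ → ⋯ → v_k of selected edges starting at a depot v₀ ∈ D with v₁,…,v_k ∈ T and each target visited once, the flow value satisfies z_{v_{k-1} v_k} = ∑_{ℓ=0}^{k-1} f_{v_ℓ v_{ℓ+1}}, i.e. z on the last edge equals the cumulative fuel consumed since the depot; consequently the total fuel on any depot-to-depot segment of the route is at most F. -/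
lemma aux_zero {α : Type*} [DecidableEq α] (S : Finset α) (x : α → ℕ)
    (hsum : ∑ e ∈ S, x e = 1) (e0 : α) (he0S : e0 ∈ S) (he0 : x e0 = 1) :
    ∀ e ∈ S, e ≠ e0 → x e = 0 := by
  intro e heS hne
  have h1 : ∑ e ∈ S.erase e0, x e + x e0 = ∑ e ∈ S, x e := Finset.sum_erase_add S x he0S
  have h2 : ∑ e ∈ S.erase e0, x e = 0 := by omega
  exact (Finset.sum_eq_zero_iff.mp h2) e (Finset.mem_erase.mpr ⟨hne, heS⟩)

/-- Along a selected directed path starting at a depot and visiting distinct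
targets, the flow variable on the last edge equals the cumulative fuel consumed
since the depot; consequently the cumulative fuel is at most `F`. -/
theorem stmt_9 (V : Type*) [Fintype V] [DecidableEq V]
    (E : Finset (V × V)) (D : Finset V) (x : V × V → ℕ) (z f : V × V → ℝ) (F : ℝ)
    (hF : 0 < F)
    (hf : ∀ e ∈ E, 0 < f e)
    (hx : ∀ e, x e = 0 ∨ x e = 1)
    (hznn : ∀ e ∈ E, 0 ≤ z e)
    (hzcap : ∀ e ∈ E, z e ≤ F * (x e : ℝ))
    (hbal : ∀ i : V, i ∉ D →
      ∑ e ∈ E.filter (fun e => e.1 = i), z e - ∑ e ∈ E.filter (fun e => e.2 = i), z e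
        = ∑ e ∈ E.filter (fun e => e.1 = i), f e * (x e : ℝ))
    (hdep : ∀ d ∈ D, ∀ i : V, (d, i) ∈ E → z (d, i) = f (d, i) * (x (d, i) : ℝ))
    -- each visited target has in-degree and out-degree exactly one:
    (hdeg : ∀ i : V, i ∉ D → (∃ e ∈ E, x e = 1 ∧ (e.1 = i ∨ e.2 = i)) →
      ∑ e ∈ E.filter (fun e => e.1 = i), x e = 1 ∧
      ∑ e ∈ E.filter (fun e => e.2 = i), x e = 1) :
    ∀ (k : ℕ) (w : ℕ → V), 0 < k → w 0 ∈ D →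
      (∀ i, 1 ≤ i → i ≤ k → w i ∉ D) →
      (∀ i j, i ≤ k → j ≤ k → w i = w j → i = j) →
      (∀ i < k, (w i, w (i + 1)) ∈ E ∧ x (w i, w (i + 1)) = 1) →
      z (w (k - 1), w k) = ∑ ℓ ∈ Finset.range k, f (w ℓ, w (ℓ + 1)) ∧
      ∑ ℓ ∈ Finset.range k, f (w ℓ, w (ℓ + 1)) ≤ F := by
  -- key lemma by induction
  have key : ∀ (m : ℕ) (w : ℕ → V), w 0 ∈ D →
      (∀ i, 1 ≤ i → i ≤ m + 1 → w i ∉ D) →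
      (∀ i j, i ≤ m + 1 → j ≤ m + 1 → w i = w j → i = j) →
      (∀ i < m + 1, (w i, w (i + 1)) ∈ E ∧ x (w i, w (i + 1)) = 1) →
      z (w m, w (m + 1)) = ∑ ℓ ∈ Finset.range (m + 1), f (w ℓ, w (ℓ + 1)) := by
    intro m
    induction m with
    | zero =>
      intro w h0 _ _ hE
      obtain ⟨hEmem, hx1⟩ := hE 0 (by norm_num)
      rw [hdep (w 0) h0 (w 1) hEmem, hx1]
      simp
    | succ m ih =>
      intro w h0 hnD hinj hE
      -- apply IH to first m+1 edges
      have ihz : z (w m, w (m + 1)) = ∑ ℓ ∈ Finset.range (m + 1), f (w ℓ, w (ℓ + 1)) :=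
        ih w h0 (fun i h1 h2 => hnD i h1 (by omega))
          (fun i j hi hj => hinj i j (by omega) (by omega))
          (fun i hi => hE i (by omega))
      set i := w (m + 1) with hi
      have hiD : i ∉ D := hnD (m + 1) (by omega) (by omega)
      obtain ⟨e0E, e0x⟩ := hE m (by omega)
      obtain ⟨e1E, e1x⟩ := hE (m + 1) (by omega)
      have hdegs := hdeg i hiD ⟨(w m, w (m + 1)), e0E, e0x, Or.inr rfl⟩
      -- out filter / in filter
      set Sout := E.filter (fun e => e.1 = i) with hSout
      set Sin := E.filter (fun e => e.2 = i) with hSin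
      have e1mem : (w (m + 1), w (m + 2)) ∈ Sout := Finset.mem_filter.mpr ⟨e1E, rfl⟩
      have e0mem : (w m, w (m + 1)) ∈ Sin := Finset.mem_filter.mpr ⟨e0E, rfl⟩
      have hzero_out : ∀ e ∈ Sout, e ≠ (w (m + 1), w (m + 2)) → x e = 0 :=
        aux_zero Sout x hdegs.1 _ e1mem e1x
      have hzero_in : ∀ e ∈ Sin, e ≠ (w m, w (m + 1)) → x e = 0 :=
        aux_zero Sin x hdegs.2 _ e0mem e0x
      have hz0 : ∀ e ∈ E, x e = 0 → z e = 0 := by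
        intro e heE hxe
        have h1 := hzcap e heE
        have h2 := hznn e heE
        rw [hxe] at h1
        push_cast at h1
        linarith
      have hsumout : ∑ e ∈ Sout, z e = z (w (m + 1), w (m + 2)) := by
        refine Finset.sum_eq_single_of_mem _ e1mem ?_
        intro e he hne
        exact hz0 e (Finset.mem_filter.mp he).1 (hzero_out e he hne)
      have hsumin : ∑ e ∈ Sin, z e = z (w m, w (m + 1)) := by
        refine Finset.sum_eq_single_of_mem _ e0mem ?_
        intro e he hne
        exact hz0 e (Finset.mem_filter.mp he).1 (hzero_in e he hne)
      have hsumfx : ∑ e ∈ Sout, f e * (x e : ℝ) = f (w (m + 1), w (m + 2)) := by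
        rw [Finset.sum_eq_single_of_mem _ e1mem ?_]
        · rw [e1x]; push_cast; ring
        · intro e he hne
          rw [hzero_out e he hne]; push_cast; ring
      have hb := hbal i hiD
      rw [← hSout, ← hSin, hsumout, hsumin, hsumfx] at hb
      rw [Finset.sum_range_succ, ← ihz]
      linarith
  intro k w hk h0 hnD hinj hE
  obtain ⟨m, rfl⟩ : ∃ m, k = m + 1 := ⟨k - 1, by omega⟩
  have hz := key m w h0 hnD hinj hE
  have hfin : z (w m, w (m + 1)) ≤ F := by
    obtain ⟨hEmem, hx1⟩ := hE m (by omega)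
    have := hzcap _ hEmem
    rw [hx1] at this
    push_cast at this
    linarith
  simp only [Nat.add_sub_cancel]
  exact ⟨hz, by rw [← hz]; exact hfin⟩
end
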